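/- arXiv:1808.03555 — 4 statements merged into one kernel-verified Lean document; each statement's English description precedes it below -/
import Mathlib

section
/- Let W ∈ ℝ^{m×n} be a workload matrix whose columns are constant on each group of a partition: for every group g_i and all j, j′ ∈ g_i, column j of W equals column j′ of W. Let P be the corresponding partition matrix and P⁺ = Pᵀ D⁻¹. Then the workload-based reduction is lossless: for every data vector x ∈ ℝⁿ, W x = (W P⁺)(P x), i.e., the reduced workload W′ = W P⁺ applied to the reduced data vector x′ = P x reproduces all original workload answers. -/
open Matrix

/-- The partition matrix `P ∈ ℝ^{p×n}` of a partition of `{1,…,n}` into the (nonempty)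
groups `g_i = f⁻¹(i)`, i.e. `P i j = 1` if `f j = i` and `0` otherwise. -/
noncomputable def partitionMatrix (n p : ℕ) (f : Fin n → Fin p) :
    Matrix (Fin p) (Fin n) ℝ :=
  Matrix.of fun i j => if f j = i then 1 else 0

/-- The diagonal matrix `D` of group sizes, `D i i = |g_i|`. -/
noncomputable def groupSizeDiag (n p : ℕ) (f : Fin n → Fin p) :
    Matrix (Fin p) (Fin p) ℝ :=
  Matrix.diagonal fun i => ((Finset.univ.filter fun j => f j = i).card : ℝ)

/-- The pseudoinverse `P⁺ := Pᵀ D⁻¹` of the partition matrix. -/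
noncomputable def partitionPseudoInv (n p : ℕ) (f : Fin n → Fin p) :
    Matrix (Fin n) (Fin p) ℝ :=
  (partitionMatrix n p f)ᵀ * (groupSizeDiag n p f)⁻¹

/-- **Losslessness of the workload-based reduction.**  If the columns of the workload
matrix `W` are constant on each group of the partition, then for every data vector
`x`, `W x = (W P⁺)(P x)`: the reduced workload `W′ = W P⁺` applied to the reduced
data vector `x′ = P x` reproduces all original workload answers. -/
theorem workload_reduction_lossless (n p m : ℕ) (hn : 0 < n) (hp : 0 < p)
    (f : Fin n → Fin p) (hf : Function.Surjective f)
    (W : Matrix (Fin m) (Fin n) ℝ)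
    (hW : ∀ j j' : Fin n, f j = f j' → ∀ k : Fin m, W k j = W k j') :
    ∀ x : Fin n → ℝ,
      W *ᵥ x = (W * partitionPseudoInv n p f) *ᵥ (partitionMatrix n p f *ᵥ x) := by
  intro x
  funext k
  set c : Fin p → ℝ := fun i => ((Finset.univ.filter fun j => f j = i).card : ℝ) with hc
  have hcpos : ∀ i, c i ≠ 0 := by
    intro i
    obtain ⟨j, hj⟩ := hf i
    have hmem : j ∈ Finset.univ.filter fun j => f j = i := by simp [hj]
    have h1 : 0 < (Finset.univ.filter fun j => f j = i).card := Finset.card_pos.2 ⟨j, hmem⟩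
    have h2 : ((Finset.univ.filter fun j => f j = i).card : ℝ) ≠ 0 := Nat.cast_ne_zero.2 h1.ne'
    exact h2
  have hDinv : (groupSizeDiag n p f)⁻¹ = Matrix.diagonal fun i => (c i)⁻¹ := by
    refine Matrix.inv_eq_right_inv ?_
    rw [groupSizeDiag, Matrix.diagonal_mul_diagonal]
    have h3 : (fun i => ((Finset.univ.filter fun j => f j = i).card : ℝ) * (c i)⁻¹)
        = fun _ => (1 : ℝ) := funext fun i => mul_inv_cancel₀ (hcpos i)
    rw [h3]
    exact Matrix.diagonal_one
  have hWP : ∀ i : Fin p, (W * partitionPseudoInv n p f) k i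
      = (∑ j ∈ Finset.univ.filter fun j => f j = i, W k j) * (c i)⁻¹ := by
    intro i
    rw [partitionPseudoInv, hDinv, ← Matrix.mul_assoc, Matrix.mul_apply]
    simp only [Matrix.mul_apply, Matrix.diagonal_apply, transpose_apply, partitionMatrix,
      Matrix.of_apply]
    rw [Finset.sum_eq_single i]
    · rw [Finset.sum_filter, Finset.sum_mul, Finset.sum_mul]
      apply Finset.sum_congr rfl
      intro j _
      by_cases h : f j = i <;> simp [h]
    · intro b _ hb; simp [hb]
    · simp
  have hPx : ∀ i : Fin p, (partitionMatrix n p f *ᵥ x) i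
      = ∑ j ∈ Finset.univ.filter fun j => f j = i, x j := by
    intro i
    simp [partitionMatrix, mulVec, dotProduct, Finset.sum_filter, ite_mul]
  rw [mulVec, mulVec, dotProduct, dotProduct]
  simp_rw [hWP, hPx]
  rw [← Finset.sum_fiberwise Finset.univ f (fun j => W k j * x j)]
  refine Finset.sum_congr rfl fun i _ => ?_
  obtain ⟨j₀, hj₀⟩ := hf i
  have hconst : ∀ j ∈ Finset.univ.filter fun j => f j = i, W k j = W k j₀ := fun j hj =>
    hW j j₀ (by simpa [hj₀] using (Finset.mem_filter.1 hj).2) k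
  calc ∑ j ∈ Finset.univ.filter fun j => f j = i, W k j * x j
      = ∑ j ∈ Finset.univ.filter fun j => f j = i, W k j₀ * x j :=
        Finset.sum_congr rfl fun j hj => by rw [hconst j hj]
    _ = W k j₀ * ∑ j ∈ Finset.univ.filter fun j => f j = i, x j := by rw [Finset.mul_sum]
    _ = (∑ j ∈ Finset.univ.filter fun j => f j = i, W k j) * (c i)⁻¹
          * ∑ j ∈ Finset.univ.filter fun j => f j = i, x j := by
        rw [Finset.sum_congr rfl hconst, Finset.sum_const, nsmul_eq_mul]
        have : c i = ((Finset.univ.filter fun j => f j = i).card : ℝ) := rfl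
        field_simp [← this, hcpos i]
        try ring
end

section
/- Let P be a partition matrix with P⁺ = Pᵀ D⁻¹. For every m×n real matrix Q, the maximum L1 column norm does not increase under reduction: ‖Q P⁺‖₁ ≤ ‖Q‖₁. (Consequently the L1 sensitivity of the reduced query matrix is at most that of the original.) -/
open Matrix

/-- The maximum `L1` column norm `‖A‖₁` of a real matrix: the maximum over columns
`j` of the column absolute sum `Σ_i |A i j|`. -/
noncomputable def maxColL1 {m k : Type*} [Fintype m] [Fintype k]
    (A : Matrix m k ℝ) : ℝ :=
  ⨆ j, ∑ i, |A i j|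

/-- The maximum `L1` column norm (hence the `L1` sensitivity) does not increase under
workload-based reduction: `‖Q P⁺‖₁ ≤ ‖Q‖₁`. -/
theorem sensitivity_not_increased_by_reduction (n p m : ℕ) (hn : 0 < n) (hp : 0 < p)
    (f : Fin n → Fin p) (hf : Function.Surjective f)
    (Q : Matrix (Fin m) (Fin n) ℝ) :
    maxColL1 (Q * partitionPseudoInv n p f) ≤ maxColL1 Q := by
  haveI : Nonempty (Fin n) := ⟨⟨0, hn⟩⟩
  haveI : Nonempty (Fin p) := ⟨⟨0, hp⟩⟩
  set S : Fin p → Finset (Fin n) := fun i => Finset.univ.filter fun j => f j = i with hS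
  have hcard : ∀ i, 0 < (S i).card := by
    intro i
    obtain ⟨j, hj⟩ := hf i
    exact Finset.card_pos.mpr ⟨j, by simp [hS, hj]⟩
  set c : Fin p → ℝ := fun i => ((S i).card : ℝ)⁻¹ with hc
  have hcpos : ∀ i, 0 < c i := fun i => inv_pos.mpr (by exact_mod_cast hcard i)
  -- inverse of D
  have hDinv : (groupSizeDiag n p f)⁻¹ = Matrix.diagonal c := by
    apply Matrix.inv_eq_right_inv
    rw [groupSizeDiag, Matrix.diagonal_mul_diagonal]
    have h1 : (fun i => ((Finset.univ.filter fun j => f j = i).card : ℝ) * c i)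
        = fun _ => (1 : ℝ) := by
      funext i
      exact mul_inv_cancel₀ (Nat.cast_ne_zero.mpr (hcard i).ne')
    rw [h1, Matrix.diagonal_one]
  have hentry : ∀ (k : Fin m) (i : Fin p),
      (Q * partitionPseudoInv n p f) k i = ∑ j ∈ S i, Q k j * c i := by
    intro k i
    rw [Matrix.mul_apply]
    have hP : ∀ j, partitionPseudoInv n p f j i = if f j = i then c i else 0 := by
      intro j
      rw [partitionPseudoInv, hDinv, Matrix.mul_apply]
      rw [Finset.sum_eq_single i]
      · simp [partitionMatrix, Matrix.diagonal, ite_mul]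
      · intro b _ hb; simp [Matrix.diagonal, hb]
      · simp
    simp only [hP, hS, Finset.sum_filter, mul_ite, mul_zero]
  -- maxColL1 Q bounds column sums
  have hcol : ∀ j : Fin n, ∑ k, |Q k j| ≤ maxColL1 Q := by
    intro j
    rw [maxColL1]
    exact le_ciSup (f := fun j => ∑ k, |Q k j|) (Finite.bddAbove_range _) j
  rw [maxColL1]
  apply ciSup_le
  intro i
  calc ∑ k, |(Q * partitionPseudoInv n p f) k i|
      ≤ ∑ k, ∑ j ∈ S i, |Q k j| * c i := by
        apply Finset.sum_le_sum
        intro k _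
        rw [hentry]
        refine (Finset.abs_sum_le_sum_abs _ _).trans ?_
        apply le_of_eq
        apply Finset.sum_congr rfl
        intro j _
        rw [abs_mul, abs_of_pos (hcpos i)]
    _ = ∑ j ∈ S i, (∑ k, |Q k j|) * c i := by
        rw [Finset.sum_comm]
        simp [Finset.sum_mul]
    _ ≤ ∑ j ∈ S i, maxColL1 Q * c i := by
        apply Finset.sum_le_sum
        intro j _
        exact mul_le_mul_of_nonneg_right (hcol j) (hcpos i).le
    _ = maxColL1 Q := by
        have hne : ((S i).card : ℝ) ≠ 0 := Nat.cast_ne_zero.mpr (hcard i).ne'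
        rw [Finset.sum_const, nsmul_eq_mul, hc]
        field_simp
end

section
/- Let Q ∈ ℝ^{m×n} be a query matrix, let q ∈ ℝⁿ be a row vector in the row space of Q (i.e., q = zQ for some z ∈ ℝ^m), and let P be a partition matrix with P⁺ = Pᵀ D⁻¹. Define the reduced query q′ = q P⁺ and reduced query matrix Q′ = Q P⁺. Then the expected error never increases under workload-based reduction: ‖Q′‖₁² · inf{‖ẑ‖₂² : ẑQ′ = q′} ≤ ‖Q‖₁² · inf{‖z‖₂² : zQ = q}, i.e., Error_{q′}(Q′) ≤ Error_q(Q). -/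
open Matrix

lemma card_pos' {n p : ℕ} (f : Fin n → Fin p) (hf : Function.Surjective f) (i : Fin p) :
    0 < (Finset.univ.filter fun j => f j = i).card := by
  obtain ⟨j, hj⟩ := hf i
  exact Finset.card_pos.mpr ⟨j, by simp [hj]⟩

lemma groupSizeDiag_inv (n p : ℕ) (f : Fin n → Fin p) (hf : Function.Surjective f) :
    (groupSizeDiag n p f)⁻¹ =
      Matrix.diagonal fun i => ((Finset.univ.filter fun j => f j = i).card : ℝ)⁻¹ := by
  apply Matrix.inv_eq_right_inv
  rw [groupSizeDiag, Matrix.diagonal_mul_diagonal, ← Matrix.diagonal_one]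
  ext i j
  by_cases h : i = j
  · subst h
    have hc : ((Finset.univ.filter fun l => f l = i).card : ℝ) ≠ 0 :=
      Nat.cast_ne_zero.mpr (card_pos' f hf i).ne'
    simp [Matrix.diagonal_apply_eq, mul_inv_cancel₀ hc]
  · simp [Matrix.diagonal_apply_ne _ h]

lemma pinv_apply (n p : ℕ) (f : Fin n → Fin p) (hf : Function.Surjective f)
    (k : Fin n) (j : Fin p) :
    partitionPseudoInv n p f k j =
      if f k = j then ((Finset.univ.filter fun l => f l = j).card : ℝ)⁻¹ else 0 := by
  rw [partitionPseudoInv, groupSizeDiag_inv n p f hf, Matrix.mul_apply]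
  simp [partitionMatrix, Matrix.diagonal, Matrix.transpose_apply, ite_and]

lemma maxColL1_reduce (n p m : ℕ) (hp : 0 < p) (f : Fin n → Fin p)
    (hf : Function.Surjective f) (Q : Matrix (Fin m) (Fin n) ℝ) :
    maxColL1 (Q * partitionPseudoInv n p f) ≤ maxColL1 Q := by
  haveI : Nonempty (Fin p) := Fin.pos_iff_nonempty.mp hp
  apply ciSup_le
  intro j
  set g := Finset.univ.filter (fun l => f l = j) with hg
  set c : ℝ := (g.card : ℝ) with hc
  have hcpos : 0 < c := Nat.cast_pos.mpr (card_pos' f hf j)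
  have hentry : ∀ i, (Q * partitionPseudoInv n p f) i j
      = c⁻¹ * ∑ k ∈ g, Q i k := by
    intro i
    rw [Matrix.mul_apply]
    simp only [pinv_apply n p f hf, mul_ite, mul_zero]
    rw [← Finset.sum_filter, ← Finset.sum_mul, mul_comm]
  calc ∑ i, |(Q * partitionPseudoInv n p f) i j|
      = ∑ i, |c⁻¹ * ∑ k ∈ g, Q i k| := by simp only [hentry]
    _ ≤ ∑ i, c⁻¹ * ∑ k ∈ g, |Q i k| := by
        refine Finset.sum_le_sum fun i _ => ?_
        rw [abs_mul, abs_of_nonneg (inv_nonneg.mpr hcpos.le)]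
        exact mul_le_mul_of_nonneg_left (Finset.abs_sum_le_sum_abs _ _)
          (inv_nonneg.mpr hcpos.le)
    _ = c⁻¹ * ∑ k ∈ g, ∑ i, |Q i k| := by rw [← Finset.mul_sum, Finset.sum_comm]
    _ ≤ c⁻¹ * ∑ k ∈ g, maxColL1 Q := by
        refine mul_le_mul_of_nonneg_left ?_ (inv_nonneg.mpr hcpos.le)
        refine Finset.sum_le_sum fun k _ => ?_
        exact le_ciSup (f := fun k => ∑ i, |Q i k|)
          (Set.Finite.bddAbove (Set.finite_range _)) k
    _ = maxColL1 Q := by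
        rw [Finset.sum_const, nsmul_eq_mul, ← hc, ← mul_assoc,
          inv_mul_cancel₀ hcpos.ne', one_mul]

/-- **Workload-based reduction never increases the expected error.**  For a query
matrix `Q`, a query `q` in the row space of `Q`, and the reductions `q′ = q P⁺`,
`Q′ = Q P⁺`, one has
`‖Q′‖₁² · inf{‖ẑ‖₂² : ẑ Q′ = q′} ≤ ‖Q‖₁² · inf{‖z‖₂² : z Q = q}`,
i.e. `Error_{q′}(Q′) ≤ Error_q(Q)`. -/
theorem error_not_increased_by_reduction (n p m : ℕ) (hn : 0 < n) (hp : 0 < p)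
    (f : Fin n → Fin p) (hf : Function.Surjective f)
    (Q : Matrix (Fin m) (Fin n) ℝ) (q : Fin n → ℝ)
    (hq : ∃ z : Fin m → ℝ, z ᵥ* Q = q) :
    maxColL1 (Q * partitionPseudoInv n p f) ^ 2 *
        sInf {r : ℝ | ∃ z : Fin m → ℝ,
          z ᵥ* (Q * partitionPseudoInv n p f) = q ᵥ* partitionPseudoInv n p f ∧
          r = ∑ i, z i ^ 2} ≤
      maxColL1 Q ^ 2 *
        sInf {r : ℝ | ∃ z : Fin m → ℝ, z ᵥ* Q = q ∧ r = ∑ i, z i ^ 2} := by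

  obtain ⟨z0, hz0⟩ := hq
  set Pinv := partitionPseudoInv n p f with hP
  set S : Set ℝ := {r : ℝ | ∃ z : Fin m → ℝ, z ᵥ* Q = q ∧ r = ∑ i, z i ^ 2} with hS
  set S' : Set ℝ := {r : ℝ | ∃ z : Fin m → ℝ,
      z ᵥ* (Q * Pinv) = q ᵥ* Pinv ∧ r = ∑ i, z i ^ 2} with hS'
  have hsub : S ⊆ S' := by
    rintro r ⟨z, hz, rfl⟩
    exact ⟨z, by rw [← Matrix.vecMul_vecMul, hz], rfl⟩
  have hSne : S.Nonempty := ⟨_, z0, hz0, rfl⟩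
  have hS'bdd : BddBelow S' := ⟨0, by rintro r ⟨z, _, rfl⟩; positivity⟩
  have hinf : sInf S' ≤ sInf S := csInf_le_csInf hS'bdd hSne hsub
  have hinf0 : 0 ≤ sInf S' :=
    le_csInf (hSne.mono hsub) (by rintro r ⟨z, _, rfl⟩; positivity)
  have h1 : maxColL1 (Q * Pinv) ≤ maxColL1 Q := maxColL1_reduce n p m hp f hf Q
  have h0 : 0 ≤ maxColL1 (Q * Pinv) :=
    Real.iSup_nonneg fun j => Finset.sum_nonneg fun i _ => abs_nonneg _
  have hsq : maxColL1 (Q * Pinv) ^ 2 ≤ maxColL1 Q ^ 2 := by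
    have := pow_le_pow_left₀ h0 h1 2
    exact this
  exact mul_le_mul hsq hinf hinf0 (by positivity)
end

section
/- Let w_1,…,w_n ∈ ℝ^m be the columns of a workload matrix W. For v ∈ ℝ^m define h(v) = Wᵀ v, so h_j(v) = w_j · v. Then: (i) for every v, if w_i = w_j then h_i(v) = h_j(v); and (ii) the set {v ∈ [0,1]^m : there exist i, j with w_i ≠ w_j and h_i(v) = h_j(v)} has Lebesgue measure zero. Consequently, for v drawn uniformly from [0,1]^m, with probability one the grouping of indices {1,…,n} by equal values of h(v) coincides exactly with the grouping of indices by equal columns of W. -/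
open Matrix MeasureTheory

lemma hyperplane_volume_zero {m : ℕ} (c : Fin m → ℝ) (hc : c ≠ 0) :
    volume {v : Fin m → ℝ | c ⬝ᵥ v = 0} = 0 := by
  obtain ⟨k, hk⟩ : ∃ k, c k ≠ 0 := by
    by_contra h
    push_neg at h
    exact hc (funext h)
  let f : (Fin m → ℝ) →ₗ[ℝ] ℝ :=
    { toFun := fun v => c ⬝ᵥ v
      map_add' := fun x y => dotProduct_add c x y
      map_smul' := fun r x => by simp [dotProduct_smul] }
  have hker : LinearMap.ker f ≠ ⊤ := by
    intro h
    have : f (Pi.single k 1) = 0 := by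
      rw [← LinearMap.mem_ker, h]; trivial
    simp [f, dotProduct_single] at this
    exact hk this
  have := Measure.addHaar_submodule (volume : Measure (Fin m → ℝ))
    (LinearMap.ker f) hker
  have heq : {v : Fin m → ℝ | c ⬝ᵥ v = 0} = (LinearMap.ker f : Set (Fin m → ℝ)) := by
    ext v; simp [LinearMap.mem_ker, f]
  rw [heq]; exact this

/-- **Correctness of randomized workload-based partition selection.**  Let
`w 1, …, w n ∈ ℝ^m` be the columns of a workload matrix and `h(v) j = w j ⬝ v`.
Then (i) equal columns always yield equal entries of `h(v)`; (ii) the set of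
`v ∈ [0,1]^m` at which two *distinct* columns collide has Lebesgue measure zero;
consequently (iii) for almost every `v ∈ [0,1]^m`, grouping indices by equal values
of `h(v)` coincides exactly with grouping by equal columns. -/
theorem random_projection_grouping_correct (m n : ℕ) (w : Fin n → Fin m → ℝ) :
    (∀ (v : Fin m → ℝ) (i j : Fin n), w i = w j → w i ⬝ᵥ v = w j ⬝ᵥ v) ∧
    volume {v : Fin m → ℝ | (∀ k, v k ∈ Set.Icc (0 : ℝ) 1) ∧
      ∃ i j : Fin n, w i ≠ w j ∧ w i ⬝ᵥ v = w j ⬝ᵥ v} = 0 ∧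
    volume {v : Fin m → ℝ | (∀ k, v k ∈ Set.Icc (0 : ℝ) 1) ∧
      ¬ ∀ i j : Fin n, (w i ⬝ᵥ v = w j ⬝ᵥ v ↔ w i = w j)} = 0 := by
  have part1 : ∀ (v : Fin m → ℝ) (i j : Fin n), w i = w j → w i ⬝ᵥ v = w j ⬝ᵥ v :=
    fun v i j h => by rw [h]
  have part2 : volume {v : Fin m → ℝ | (∀ k, v k ∈ Set.Icc (0 : ℝ) 1) ∧
      ∃ i j : Fin n, w i ≠ w j ∧ w i ⬝ᵥ v = w j ⬝ᵥ v} = 0 := by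
    have hsub : {v : Fin m → ℝ | (∀ k, v k ∈ Set.Icc (0 : ℝ) 1) ∧
        ∃ i j : Fin n, w i ≠ w j ∧ w i ⬝ᵥ v = w j ⬝ᵥ v} ⊆
        ⋃ (i : Fin n) (j : Fin n), {v : Fin m → ℝ | w i ≠ w j ∧ w i ⬝ᵥ v = w j ⬝ᵥ v} := by
      rintro v ⟨-, i, j, hij, hv⟩
      exact Set.mem_iUnion.2 ⟨i, Set.mem_iUnion.2 ⟨j, hij, hv⟩⟩
    refine measure_mono_null hsub ?_
    refine measure_iUnion_null fun i => measure_iUnion_null fun j => ?_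
    by_cases hij : w i = w j
    · simp [hij]
    · have hsub2 : {v : Fin m → ℝ | w i ≠ w j ∧ w i ⬝ᵥ v = w j ⬝ᵥ v} ⊆
          {v : Fin m → ℝ | (w i - w j) ⬝ᵥ v = 0} := by
        rintro v ⟨-, hv⟩
        simpa [sub_dotProduct, sub_eq_zero] using hv
      refine measure_mono_null hsub2 (hyperplane_volume_zero _ ?_)
      exact sub_ne_zero.2 hij
  refine ⟨part1, part2, measure_mono_null ?_ part2⟩
  rintro v ⟨hbox, hv⟩
  refine ⟨hbox, ?_⟩
  push_neg at hv
  obtain ⟨i, j, hij⟩ := hv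
  rcases hij with h | h
  · exact ⟨i, j, h.2, h.1⟩
  · exact absurd (part1 v i j h.2) h.1
end
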